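/- For any knot K in S^3, the width and trunk satisfy w(K) ≥ trunk(K)²/2. -/

import Mathlib

open scoped Manifold Topology
open Metric Set Topology

noncomputable section

/-! ### Basic spaces -/

/-- The 3-sphere `S³`, realized as the unit sphere in `ℝ⁴`. -/
abbrev S3 : Type := Metric.sphere (0 : EuclideanSpace ℝ (Fin 4)) 1

/-- The closed unit disk in `ℂ`, model for a 2-disk. -/
def Disk2 : Set ℂ := Metric.closedBall 0 1

/-- A standard annulus in `ℂ`. -/
def Annulus2 : Set ℂ := {z : ℂ | 1 ≤ ‖z‖ ∧ ‖z‖ ≤ 2}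

/-- A subset of `S³` is a knot if it is homeomorphic to the circle. -/
def IsKnot (K : Set S3) : Prop := Nonempty (K ≃ₜ Circle)

/-- A subset of `S³` which is a (topological) torus surface. -/
def IsTorusSurface (T : Set S3) : Prop := Nonempty (T ≃ₜ (Circle × Circle))

/-- A subset of `S³` homeomorphic to a circle (a simple closed curve). -/
def IsCircleSet (s : Set S3) : Prop := Nonempty (s ≃ₜ Circle)

/-- A subset of `S³` homeomorphic to a closed 3-ball. -/
def IsBall3 (B : Set S3) : Prop :=
  Nonempty (B ≃ₜ (Metric.closedBall (0 : EuclideanSpace ℝ (Fin 3)) 1))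

/-- A subset of `S³` homeomorphic to a solid torus. -/
def IsSolidTorusSet (V : Set S3) : Prop := Nonempty (V ≃ₜ (Circle × ↥Disk2))

/-- Ambient isotopy of subsets of `S³`: a continuous family of homeomorphisms starting
at the identity carrying `A` onto `B`. -/
def AmbientIsotopic (A B : Set S3) : Prop :=
  ∃ F : C(ℝ × S3, S3), (∀ x, F (0, x) = x) ∧ (∀ t, IsHomeomorph fun x => F (t, x)) ∧
    (fun x => F (1, x)) '' A = B

/-- The standard (round) unknot in `S³`: a great circle. -/
def stdUnknot : Set S3 :=
  {x : S3 | (x : EuclideanSpace ℝ (Fin 4)) 2 = 0 ∧ (x : EuclideanSpace ℝ (Fin 4)) 3 = 0}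

/-- `D` is an embedded disk in `S³` with boundary the curve `s`. -/
def IsDiskWithBoundary (D s : Set S3) : Prop :=
  ∃ f : ℂ → S3, ContinuousOn f Disk2 ∧ Set.InjOn f Disk2 ∧ f '' Disk2 = D ∧
    f '' Metric.sphere (0 : ℂ) 1 = s

/-- The curve `s` bounds a disk contained in `A`. -/
def BoundsDiskIn (s A : Set S3) : Prop := ∃ D, D ⊆ A ∧ IsDiskWithBoundary D s

/-- Two curves cobound an embedded annulus inside `W` (are parallel in `W`). -/
def CoboundAnnulusIn (γ₁ γ₂ W : Set S3) : Prop :=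
  ∃ f : ℂ → S3, ContinuousOn f Annulus2 ∧ Set.InjOn f Annulus2 ∧ f '' Annulus2 ⊆ W ∧
    f '' Metric.sphere (0 : ℂ) 1 = γ₁ ∧ f '' Metric.sphere (0 : ℂ) 2 = γ₂

/-! ### Morse functions on `S³` adapted to a knot -/

/-- `h : S³ → ℝ` is smooth with exactly two critical points on `S³`. -/
def SmoothTwoCrit (h : S3 → ℝ) : Prop :=
  ContMDiff (𝓡 3) 𝓘(ℝ, ℝ) (⊤ : ℕ∞) h ∧
    {x : S3 | mfderiv (𝓡 3) 𝓘(ℝ, ℝ) h x = 0}.ncard = 2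

/-- An element of `𝓜(K)`: a Morse function `h` on `S³` with exactly two critical points
such that `h` restricted to the knot `K` is Morse, together with the (finitely many,
distinct) critical values `c 0 < c 1 < ⋯ < c n` of `h|_K`.  Since `h|_K` is a Morse
function on a circle, its critical points are precisely its local extrema on `K`. -/
structure KnotMorse (K : Set S3) where
  /-- the underlying Morse function on `S³` -/
  h : S3 → ℝ
  smooth_twoCrit : SmoothTwoCrit h
  /-- `h|_K` has `n + 1` critical points/values -/
  n : ℕ
  /-- the critical values of `h|_K` -/
  c : Fin (n + 1) → ℝ
  c_mono : StrictMono c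
  /-- each critical value is realized by exactly one critical point of `h|_K` -/
  crit_exists : ∀ i, ∃! x, x ∈ K ∧ IsLocalExtrOn h K x ∧ h x = c i
  /-- every critical point of `h|_K` has one of the listed critical values -/
  crit_complete : ∀ x ∈ K, IsLocalExtrOn h K x → ∃ i, h x = c i
  /-- the knot lies between the lowest and highest critical levels -/
  between : ∀ x ∈ K, c 0 ≤ h x ∧ h x ≤ c (Fin.last n)
  /-- regular level sets of `h|_K` are finite -/
  level_finite : ∀ r : ℝ, (∀ i, r ≠ c i) → (K ∩ h ⁻¹' {r}).Finite

namespace KnotMorse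

variable {K : Set S3} (m : KnotMorse K)

/-- A regular value `r_{i+1}` with `c i < r_{i+1} < c (i+1)`. -/
def midpt (i : Fin m.n) : ℝ := (m.c i.castSucc + m.c i.succ) / 2

/-- `|K ∩ h⁻¹(r_{i+1})|`, the number of intersections with the `i`-th regular level. -/
def cnt (i : Fin m.n) : ℕ := (K ∩ m.h ⁻¹' {m.midpt i}).ncard

/-- The width `w(h) = Σᵢ |K ∩ h⁻¹(rᵢ)|`. -/
def width : ℕ := ∑ i, m.cnt i

/-- The bridge number `b(h) = (n+1)/2`, the number of maxima of `h|_K`. -/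
def bridge : ℕ := (m.n + 1) / 2

/-- The trunk `trunk(h) = maxᵢ |K ∩ h⁻¹(rᵢ)|`. -/
def trunk : ℕ := Finset.univ.sup fun i => m.cnt i

end KnotMorse

/-- The width `w(K)` of a knot. -/
def knotWidth (K : Set S3) : ℕ := sInf {w | ∃ m : KnotMorse K, m.width = w}

/-- The bridge number `b(K)` of a knot. -/
def knotBridge (K : Set S3) : ℕ := sInf {b | ∃ m : KnotMorse K, m.bridge = b}

/-- The trunk `trunk(K)` of a knot. -/
def knotTrunk (K : Set S3) : ℕ := sInf {t | ∃ m : KnotMorse K, m.trunk = t}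

/-- `h` is a thin position for `K` if it realizes the width. -/
def KnotMorse.IsThinPosition {K : Set S3} (m : KnotMorse K) : Prop := m.width = knotWidth K

/-- `h` is a bridge position for `K` if it realizes the bridge number and all maxima of
`h|_K` occur above all minima. -/
def KnotMorse.IsBridgePosition {K : Set S3} (m : KnotMorse K) : Prop :=
  m.bridge = knotBridge K ∧
    ∀ x ∈ K, ∀ y ∈ K, IsLocalMaxOn m.h K x → IsLocalMinOn m.h K y → m.h y < m.h x

/-! ### The solid torus, patterns, winding number, satellites -/

/-- The standard solid torus `V = S¹ × D²`. -/
abbrev STS : Type := Circle × ↥Disk2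

/-- The core circle `S¹ × {0}` of the standard solid torus. -/
def stsCore : Set STS := {p | (p.2 : ℂ) = 0}

/-- The boundary torus `S¹ × ∂D²` of the standard solid torus. -/
def stsBoundary : Set STS := {p | ‖(p.2 : ℂ)‖ = 1}

/-- The meridian disk `{z} × D²` of the standard solid torus. -/
def meridianDisk (z : Circle) : Set STS := {p | p.1 = z}

/-- A continuous map `f` of the circle to itself has degree `d`, expressed via a lift along
the universal covering `Circle.exp : ℝ → S¹`. -/
def CircleMapDegree (f : Circle → Circle) (d : ℤ) : Prop :=
  ∃ g : ℝ → ℝ, Continuous g ∧ (∀ t, f (Circle.exp t) = Circle.exp (g t)) ∧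
    ∀ t, g (t + 2 * Real.pi) = g t + d * (2 * Real.pi)

/-- The pattern `P ⊆ S¹ × D²` has winding number `w`: the absolute algebraic intersection
number of a meridian disk with `P`, i.e. the absolute degree of the composition of a
parametrization of `P` with the retraction onto the core. -/
def PatternWinding (P : Set STS) (w : ℕ) : Prop :=
  ∃ α : Circle → STS, IsEmbedding α ∧ Set.range α = P ∧
    ∃ d : ℤ, d.natAbs = w ∧ CircleMapDegree (fun z => (α z).1) d

/-- The pattern `P` is a braid of index `n`: the solid torus admits a foliation (here, the
image of the product foliation under a self-homeomorphism of `S¹ × D²`) each of whose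
leaves is a meridian disk meeting `P` exactly `n` times. -/
def IsBraidOfIndex (P : Set STS) (n : ℕ) : Prop :=
  ∃ F : STS ≃ₜ STS, ∀ z : Circle, ((F '' meridianDisk z) ∩ P).ncard = n

/-- A satellite structure on a knot `K ⊆ S³`: a pattern knot `P` in the standard solid
torus meeting every meridian disk, an embedding `φ` of the solid torus into `S³` with
`φ(P) = K`, whose core maps to a nontrivial companion knot `J`. -/
structure SatelliteStructure (K : Set S3) where
  /-- the pattern `K̂` -/
  P : Set STS
  P_knot : Nonempty (P ≃ₜ Circle)
  /-- every meridian disk of the solid torus meets the pattern -/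
  P_meridional : ∀ z : Circle, (meridianDisk z ∩ P).Nonempty
  /-- the embedding of the solid torus into `S³` -/
  φ : STS → S3
  φ_emb : IsEmbedding φ
  image_eq : φ '' P = K
  /-- the companion knot `J` -/
  J : Set S3
  J_knot : IsKnot J
  /-- the companion is a nontrivial knot -/
  J_nontrivial : ¬ AmbientIsotopic J stdUnknot
  /-- the core of the solid torus maps to a knot isotopic to the companion -/
  core_isotopic : AmbientIsotopic (φ '' stsCore) J

namespace SatelliteStructure

variable {K : Set S3} (s : SatelliteStructure K)

/-- The knotted solid torus `V = φ(S¹ × D²) ⊆ S³` containing `K`. -/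
def V : Set S3 := Set.range s.φ

/-- The companion torus `T = ∂V`. -/
def Tb : Set S3 := s.φ '' stsBoundary

end SatelliteStructure

/-! ### Saddles and the singular foliation of a surface -/

/-- `x` is a saddle point of the singular foliation of `T` induced by `h`: the leaf
through `x` (the connected component of the level set of `h|_T` containing `x`) has a
component which is a wedge of two circles `s₁` and `s₂` meeting exactly at `x`. -/
def IsSaddlePt (h : S3 → ℝ) (T : Set S3) (x : S3) : Prop :=
  x ∈ T ∧ ∃ s₁ s₂ : Set S3, IsCircleSet s₁ ∧ IsCircleSet s₂ ∧ s₁ ∩ s₂ = {x} ∧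
    s₁ ∪ s₂ = connectedComponentIn (T ∩ h ⁻¹' {h x}) x

/-- `x` is an inessential saddle of the singular foliation of `T` induced by `h`: a saddle
point one of whose wedge circles is inessential in `T` (bounds a disk in `T`). -/
def IsInessentialSaddle (h : S3 → ℝ) (T : Set S3) (x : S3) : Prop :=
  x ∈ T ∧ ∃ s₁ s₂ : Set S3, IsCircleSet s₁ ∧ IsCircleSet s₂ ∧ s₁ ∩ s₂ = {x} ∧
    s₁ ∪ s₂ = connectedComponentIn (T ∩ h ⁻¹' {h x}) x ∧
    (BoundsDiskIn s₁ T ∨ BoundsDiskIn s₂ T)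

/-- `h` restricted to the surface `T` is Morse (in particular it has finitely many
critical points: local extrema and saddles). -/
def MorseOn (h : S3 → ℝ) (T : Set S3) : Prop :=
  {x ∈ T | IsLocalExtrOn h T x ∨ IsSaddlePt h T x}.Finite

/-- `r` is a regular value of `h` restricted to `A`: no critical points (local extrema or
saddle points of the induced foliation) occur at level `r`. -/
def IsRegularValueOn (h : S3 → ℝ) (A : Set S3) (r : ℝ) : Prop :=
  ∀ x ∈ A, h x = r → ¬(IsLocalExtrOn h A x ∨ IsSaddlePt h A x)

/-! ### The essential connectivity graph -/

/-- The curves `γ₁, …, γ_n`: connected components of `h⁻¹(r) ∩ T`. -/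
def levelCurves (h : S3 → ℝ) (T : Set S3) (r : ℝ) : Set (Set S3) :=
  {γ | ∃ x ∈ h ⁻¹' {r} ∩ T, γ = connectedComponentIn (h ⁻¹' {r} ∩ T) x}

/-- The regions `R₁, …, R_m` obtained by cutting the level sphere `h⁻¹(r)` along the
curves of `h⁻¹(r) ∩ T`: closures of the connected components of the complement. -/
def levelRegions (h : S3 → ℝ) (T : Set S3) (r : ℝ) : Set (Set S3) :=
  {R | ∃ x ∈ h ⁻¹' {r} \ T, R = closure (connectedComponentIn (h ⁻¹' {r} \ T) x)}

/-- The essential curves in the boundary of a region `R` which join `R` to another region;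
these are the edges of the essential connectivity graph incident to the vertex `R`. -/
def essEdgesAt (h : S3 → ℝ) (T : Set S3) (r : ℝ) (R : Set S3) : Set (Set S3) :=
  {γ ∈ levelCurves h T r | ¬ BoundsDiskIn γ T ∧
    ∃ R' ∈ levelRegions h T r, R' ≠ R ∧ γ = R ∩ R'}

/-- `R` is an endpoint of the essential connectivity graph `Γ_r`: a vertex incident to
exactly one edge. -/
def IsEndpointRegion (h : S3 → ℝ) (T : Set S3) (r : ℝ) (R : Set S3) : Prop :=
  R ∈ levelRegions h T r ∧ (essEdgesAt h T r R).ncard = 1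

/-- The trunk of the level 2-sphere `h⁻¹(r)`: the number of endpoints of `Γ_r`. -/
def trunkAt (h : S3 → ℝ) (T : Set S3) (r : ℝ) : ℕ :=
  {R | IsEndpointRegion h T r R}.ncard

/-- The essential connectivity graph `Γ_r`: vertices are the regions of `h⁻¹(r)` cut along
`h⁻¹(r) ∩ T`, and two regions are adjacent when they meet along a curve that is essential
in `T`. -/
def connGraph (h : S3 → ℝ) (T : Set S3) (r : ℝ) : SimpleGraph (levelRegions h T r) where
  Adj R R' := R ≠ R' ∧ ∃ γ ∈ levelCurves h T r, ¬ BoundsDiskIn γ T ∧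
    γ = (R : Set S3) ∩ (R' : Set S3)
  symm := by
    constructor
    rintro R R' ⟨hne, γ, hγ, hess, heq⟩
    exact ⟨hne.symm, γ, hγ, hess, by rw [heq, Set.inter_comm]⟩
  loopless := by constructor; rintro R ⟨hne, -⟩; exact hne rfl


/-!
Parametrise the knot by the circle and cut it at the critical points of `h|_K`. On each arc
between consecutive critical points `h` is strictly monotone, so a regular level `r` meets the
arc at most once, and does so exactly when `r` lies between the values at its two ends. Hence
`|K ∩ h⁻¹(r)|` is the number of sides of the closed polygon of critical values, read in their
order along the knot, that cross `r`. Between two consecutive regular levels lies a single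
critical value, a vertex of exactly two sides, so the counts change by at most `2` from one
level to the next and are at most `2` at the lowest and highest levels. A level met `t` times
is thus flanked on each side by levels met at least `t - 2, t - 4, …` times, and summing gives
`w(h) ≥ t² / 2`. For `h` of minimal width, `w(K) = w(h) ≥ trunk(h)² / 2 ≥ trunk(K)² / 2`.
-/

open Real

theorem sq_add_two_mul_le_four_mul_sum_range {f : ℕ → ℕ} (h0 : f 0 ≤ 2) {k : ℕ}
    (hstep : ∀ i < k, f (i + 1) ≤ f i + 2) :
    f k ^ 2 + 2 * f k ≤ 4 * ∑ i ∈ Finset.range (k + 1), f i := by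
  induction k with
  | zero => simp only [zero_add, Finset.sum_range_one]; nlinarith
  | succ k ih =>
    have hk := hstep k k.lt_add_one
    rw [Finset.sum_range_succ]
    nlinarith [ih fun i hi => hstep i (by omega), Nat.mul_le_mul_left (f (k + 1)) hk,
      Nat.mul_le_mul_left (f k) hk]

theorem sq_le_two_mul_sum_range {f : ℕ → ℕ} {n i₀ : ℕ} (hi₀ : i₀ < n) (h0 : f 0 ≤ 2)
    (hlast : f (n - 1) ≤ 2)
    (hstep : ∀ i, i + 1 < n → f (i + 1) ≤ f i + 2 ∧ f i ≤ f (i + 1) + 2) :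
    f i₀ ^ 2 ≤ 2 * ∑ i ∈ Finset.range n, f i := by
  have left := sq_add_two_mul_le_four_mul_sum_range h0 (k := i₀)
    fun i hi => (hstep i (by omega)).1
  have right := sq_add_two_mul_le_four_mul_sum_range (f := fun i => f (n - 1 - i))
    (k := n - 1 - i₀) (by simpa using hlast) fun i hi => by
      simpa [show n - 1 - i = n - 1 - (i + 1) + 1 by omega] using
        (hstep (n - 1 - (i + 1)) (by omega)).2
  rw [show n - 1 - (n - 1 - i₀) = i₀ by omega, ← Nat.Ico_zero_eq_range,
    Finset.sum_Ico_reflect _ _ (by omega), show n - 1 + 1 - (n - 1 - i₀ + 1) = i₀ by omega,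
    show n - 1 + 1 - 0 = n by omega] at right
  have hsplit := Finset.sum_range_add_sum_Ico f hi₀.le
  rw [Finset.sum_range_succ] at left
  rw [Finset.sum_eq_sum_Ico_succ_bot hi₀] at right hsplit
  nlinarith

theorem Fin.sq_le_two_mul_sum {n : ℕ} {f : Fin n → ℕ}
    (hfirst : ∀ i : Fin n, (i : ℕ) = 0 → f i ≤ 2) (hlast : ∀ i : Fin n, (i : ℕ) = n - 1 → f i ≤ 2)
    (hstep : ∀ i j : Fin n, (j : ℕ) = i + 1 → f i ≤ f j + 2 ∧ f j ≤ f i + 2) (i₀ : Fin n) :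
    f i₀ ^ 2 ≤ 2 * ∑ i, f i := by
  set F : ℕ → ℕ := fun k => if h : k < n then f ⟨k, h⟩ else 0 with hF
  have hFf : ∀ i : Fin n, F i = f i := fun i => dif_pos i.isLt
  have := sq_le_two_mul_sum_range (f := F) i₀.isLt
    (by simpa [hF, i₀.pos] using hfirst ⟨0, i₀.pos⟩ rfl)
    (by simpa [hF, i₀.pos] using hlast ⟨n - 1, by have := i₀.isLt; omega⟩ rfl)
    fun k hk => by
      have hk' : k < n := by omega
      simpa [hF, hk, hk'] using (hstep ⟨k, hk'⟩ ⟨k + 1, hk⟩ rfl).symm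
  rwa [hFf, ← Fin.sum_univ_eq_sum_range, Finset.sum_congr rfl fun i _ => hFf i] at this

section Crossing

open Finset
open scoped Classical

variable {α : Type*} {v : ℕ → α} {P : ℕ}

theorem forall_lt_succ_of_forall_lt (hP : v P = v 0) {p : α → Prop} (h : ∀ k < P, p (v k))
    (k : ℕ) (hk : k < P) : p (v (k + 1)) := by
  rcases (show k + 1 ≤ P from hk).lt_or_eq with hk' | hk'
  · exact h _ hk'
  · rw [hk', hP]
    exact h 0 (by omega)

/-- Only the two sides at the one vertex in `S` can touch `S`; the vertex `v P = v 0` is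
counted once. -/
theorem card_filter_mem_or_succ_mem_le_two (hP : v P = v 0) {S : Set α}
    (hS : ∀ j < P, ∀ k < P, v j ∈ S → v k ∈ S → j = k) :
    #{k ∈ range P | v k ∈ S ∨ v (k + 1) ∈ S} ≤ 2 := by
  have hsucc : ∀ i < P, v (i + 1) ∈ S → i + 1 < P ∧ v (i + 1) ∈ S ∨ i + 1 = P ∧ v 0 ∈ S :=
    fun i hi hiS => (show i + 1 ≤ P from hi).lt_or_eq.imp (⟨·, hiS⟩)
      fun h => ⟨h, by rwa [← hP, ← h]⟩
  rw [filter_or]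
  refine (Finset.card_union_le _ _).trans
    (add_le_add (Finset.card_le_one.2 ?_) (Finset.card_le_one.2 ?_))
  all_goals simp only [Finset.mem_filter, Finset.mem_range]
  · exact fun j hj k hk => hS j hj.1 k hk.1 hj.2 hk.2
  · intro j hj k hk
    rcases hsucc j hj.1 hj.2 with ⟨h₁, h₂⟩ | ⟨h₁, h₂⟩ <;>
      rcases hsucc k hk.1 hk.2 with ⟨h₃, h₄⟩ | ⟨h₃, h₄⟩
    · have := hS _ h₁ _ h₃ h₂ h₄; omega
    · have := hS _ h₁ 0 (by omega) h₂ h₄; omega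
    · have := hS 0 (by omega) _ h₃ h₂ h₄; omega
    · omega

variable [LinearOrder α]

def crossingCount (v : ℕ → α) (P : ℕ) (ρ : α) : ℕ :=
  #{k ∈ range P | ρ ∈ uIoo (v k) (v (k + 1))}

theorem crossingCount_succ (v : ℕ → α) (P : ℕ) (ρ : α) :
    crossingCount v (P + 1) ρ =
      crossingCount v P ρ + if ρ ∈ uIoo (v P) (v (P + 1)) then 1 else 0 := by
  simp only [crossingCount, card_filter, sum_range_succ]

theorem crossingCount_eq_zero_of_forall_le {ρ : α} (hP : v P = v 0) (h : ∀ k < P, ρ ≤ v k) :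
    crossingCount v P ρ = 0 :=
  card_eq_zero.2 <| filter_eq_empty_iff.2 fun k hk hρ => hρ.1.not_ge <|
    le_inf (h k (Finset.mem_range.1 hk))
      (forall_lt_succ_of_forall_lt hP (p := (ρ ≤ ·)) h k (Finset.mem_range.1 hk))

theorem crossingCount_eq_zero_of_forall_ge {ρ : α} (hP : v P = v 0) (h : ∀ k < P, v k ≤ ρ) :
    crossingCount v P ρ = 0 :=
  card_eq_zero.2 <| filter_eq_empty_iff.2 fun k hk hρ => hρ.2.not_ge <|
    sup_le (h k (Finset.mem_range.1 hk))
      (forall_lt_succ_of_forall_lt hP (p := (· ≤ ρ)) h k (Finset.mem_range.1 hk))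

theorem mem_uIcc_of_mem_uIoo_of_notMem_uIoo {a b x y : α} (hx : x ∈ uIoo a b)
    (hy : y ∉ uIoo a b) : a ∈ uIcc x y ∨ b ∈ uIcc x y := by
  rcases le_total a b with hab | hab
  · simp only [uIoo_of_le hab, Set.mem_Ioo, not_and_or, not_lt, Set.mem_uIcc] at hx hy ⊢
    rcases hy with hy | hy
    · exact Or.inl (Or.inr ⟨hy, hx.1.le⟩)
    · exact Or.inr (Or.inl ⟨hx.2.le, hy⟩)
  · simp only [uIoo_of_ge hab, Set.mem_Ioo, not_and_or, not_lt, Set.mem_uIcc] at hx hy ⊢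
    rcases hy with hy | hy
    · exact Or.inr (Or.inr ⟨hy, hx.1.le⟩)
    · exact Or.inl (Or.inl ⟨hx.2.le, hy⟩)

theorem crossingCount_le_add_card (v : ℕ → α) (P : ℕ) (ρ ρ' : α) :
    crossingCount v P ρ ≤ crossingCount v P ρ' +
      #{k ∈ range P | v k ∈ uIcc ρ ρ' ∨ v (k + 1) ∈ uIcc ρ ρ'} := by
  refine (card_le_card_sdiff_add_card
    (t := {k ∈ range P | ρ' ∈ uIoo (v k) (v (k + 1))})).trans ?_
  rw [add_comm]
  refine add_le_add le_rfl (card_le_card fun k hk => ?_)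
  simp only [Finset.mem_sdiff, Finset.mem_filter] at hk ⊢
  exact ⟨hk.1.1, mem_uIcc_of_mem_uIoo_of_notMem_uIoo hk.1.2 fun h => hk.2 ⟨hk.1.1, h⟩⟩

theorem crossingCount_le_add_two (hP : v P = v 0) (hinj : InjOn v (Set.Iio P)) {C : Set α}
    (hv : ∀ k < P, v k ∈ C) {ρ ρ' : α} (hC : (C ∩ uIcc ρ ρ').Subsingleton) :
    crossingCount v P ρ ≤ crossingCount v P ρ' + 2 :=
  (crossingCount_le_add_card v P ρ ρ').trans <| Nat.add_le_add_left
    (card_filter_mem_or_succ_mem_le_two hP fun j hj k hk hjS hkS =>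
      hinj hj hk (hC ⟨hv j hj, hjS⟩ ⟨hv k hk, hkS⟩)) _

end Crossing

section Levels

variable {β : Type*} [LinearOrder β] {n : ℕ} {c : Fin (n + 1) → β} {x : β} {i : Fin n}

theorem StrictMono.apply_le_iff_of_mem_Ioo (hc : StrictMono c)
    (hx : x ∈ Ioo (c i.castSucc) (c i.succ)) (l : Fin (n + 1)) : c l ≤ x ↔ (l : ℕ) ≤ i := by
  constructor
  · intro h
    have := hc.lt_iff_lt.1 (h.trans_lt hx.2)
    rw [Fin.lt_def, Fin.val_succ] at this
    omega
  · intro h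
    exact (hc.monotone (Fin.le_def.2 (by simpa using h))).trans hx.1.le

theorem StrictMono.le_apply_iff_of_mem_Ioo (hc : StrictMono c)
    (hx : x ∈ Ioo (c i.castSucc) (c i.succ)) (l : Fin (n + 1)) : x ≤ c l ↔ (i : ℕ) < l := by
  constructor
  · intro h
    simpa [Fin.lt_def] using hc.lt_iff_lt.1 (hx.1.trans_le h)
  · intro h
    exact hx.2.le.trans (hc.monotone (Fin.le_def.2 (by simpa using h)))

theorem StrictMono.notMem_range_of_mem_Ioo (hc : StrictMono c)
    (hx : x ∈ Ioo (c i.castSucc) (c i.succ)) : x ∉ range c := by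
  rintro ⟨l, rfl⟩
  have h₁ := (hc.apply_le_iff_of_mem_Ioo hx l).1 le_rfl
  have h₂ := (hc.le_apply_iff_of_mem_Ioo hx l).1 le_rfl
  omega

/-- The slab between two consecutive levels, or between an extreme level and the extreme
critical value beyond it, contains a single critical value. -/
theorem sq_crossingCount_le_two_mul_sum (hc : StrictMono c) {r : Fin n → β}
    (hr : ∀ i, r i ∈ Ioo (c i.castSucc) (c i.succ)) {v : ℕ → β} {P : ℕ} (hP : v P = v 0)
    (hinj : InjOn v (Iio P)) (hv : ∀ k < P, v k ∈ range c) (i₀ : Fin n) :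
    crossingCount v P (r i₀) ^ 2 ≤ 2 * ∑ i, crossingCount v P (r i) := by
  have hle := fun i => hc.apply_le_iff_of_mem_Ioo (hr i)
  have hge := fun i => hc.le_apply_iff_of_mem_Ioo (hr i)
  have hslab (S : Set β) (j : ℕ) (hS : ∀ l, c l ∈ S → (l : ℕ) = j) :
      (range c ∩ S).Subsingleton := by
    rintro _ ⟨⟨l, rfl⟩, hl⟩ _ ⟨⟨l', rfl⟩, hl'⟩
    rw [Fin.ext ((hS l hl).trans (hS l' hl').symm)]
  refine Fin.sq_le_two_mul_sum (f := fun i => crossingCount v P (r i))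
    (fun i hi => ?_) (fun i hi => ?_) (fun i j hij => ?_) i₀
  · have := crossingCount_le_add_two (ρ := r i) (ρ' := c 0) hP hinj hv (hslab _ 0 fun l hl => by
      simp only [Set.mem_uIcc, hle, hge, hc.le_iff_le, Fin.le_iff_val_le_val, Fin.val_zero] at hl
      omega)
    rwa [crossingCount_eq_zero_of_forall_le (ρ := c 0) hP fun k hk => ?_, zero_add] at this
    obtain ⟨l, hl⟩ := hv k hk
    exact hl ▸ hc.monotone (Fin.zero_le l)
  · have := crossingCount_le_add_two (ρ := r i) (ρ' := c (Fin.last n)) hP hinj hv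
      (hslab _ n fun l hl => by
        simp only [Set.mem_uIcc, hle, hge, hc.le_iff_le, Fin.le_iff_val_le_val,
          Fin.val_last] at hl
        omega)
    rwa [crossingCount_eq_zero_of_forall_ge (ρ := c (Fin.last n)) hP fun k hk => ?_,
      zero_add] at this
    obtain ⟨l, hl⟩ := hv k hk
    exact hl ▸ hc.monotone (Fin.le_last l)
  · have hS : (range c ∩ uIcc (r i) (r j)).Subsingleton := hslab _ j fun l hl => by
      simp only [Set.mem_uIcc, hle, hge] at hl
      omega
    exact ⟨crossingCount_le_add_two hP hinj hv hS,
      crossingCount_le_add_two hP hinj hv (uIcc_comm (r i) (r j) ▸ hS)⟩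

end Levels

section CircleParam

variable {X : Type*} [TopologicalSpace X] {K : Set X} (φ : K ≃ₜ Circle)

def circleParam (t : ℝ) : X := φ.symm (Circle.exp t)

theorem continuous_circleParam : Continuous (circleParam φ) :=
  continuous_subtype_val.comp (φ.symm.continuous.comp Circle.exp.continuous)

theorem periodic_circleParam : Function.Periodic (circleParam φ) (2 * π) := fun t => by
  simp only [circleParam, Circle.exp_add_two_pi]

theorem injOn_circleParam (a : ℝ) : InjOn (circleParam φ) (Ico a (a + 2 * π)) :=
  fun _ hs _ ht h => Circle.exp_injOn_Ico (by linarith) hs ht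
    (φ.symm.injective (Subtype.val_injective h))

theorem image_circleParam_Ico (a : ℝ) : circleParam φ '' Ico a (a + 2 * π) = K := by
  refine Subset.antisymm (image_subset_iff.2 fun t _ => (φ.symm _).2) fun x hx => ?_
  obtain ⟨s, hs⟩ := Circle.exp_surjective (φ ⟨x, hx⟩)
  obtain ⟨t, ht, hst⟩ := (periodic_circleParam φ).exists_mem_Ico Real.two_pi_pos s a
  exact ⟨t, ht, by rw [← hst, circleParam, hs, Homeomorph.symm_apply_apply]⟩

theorem ncard_inter_preimage_eq_ncard_Ico {β : Type*} (f : X → β) (s : Set β) (a : ℝ) :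
    (K ∩ f ⁻¹' s).ncard = (Ico a (a + 2 * π) ∩ (f ∘ circleParam φ) ⁻¹' s).ncard := by
  rw [← (injOn_circleParam φ a).mono inter_subset_left |>.ncard_image, preimage_comp,
    image_inter_preimage, image_circleParam_Ico]

theorem map_circleParam_nhds (t : ℝ) :
    Filter.map (circleParam φ) (𝓝 t) = 𝓝[K] (circleParam φ t) := by
  change Filter.map (Subtype.val ∘ φ.symm ∘ Circle.exp) (𝓝 t) = _
  rw [← Filter.map_map, ← Filter.map_map, isLocalHomeomorph_circleExp.map_nhds_eq,
    φ.symm.map_nhds_eq, map_nhds_subtype_val]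
  rfl

theorem isLocalExtr_comp_circleParam_iff {β : Type*} [Preorder β] {f : X → β} {t : ℝ} :
    IsLocalExtr (f ∘ circleParam φ) t ↔ IsLocalExtrOn f K (circleParam φ t) := by
  simp only [IsLocalExtr, IsLocalExtrOn, ← map_circleParam_nhds, IsExtrFilter, IsMinFilter,
    IsMaxFilter, Filter.eventually_map, Function.comp_apply]

end CircleParam

theorem Set.Finite.exists_strictMonoOn_enum {α : Type*} [LinearOrder α] {T : Set α}
    (hT : T.Finite) {a b : α} (ha : a ∈ T) (hTab : T ⊆ Ico a b) :
    ∃ (P : ℕ) (A : ℕ → α), StrictMonoOn A (Iic P) ∧ A 0 = a ∧ A P = b ∧ A '' Iio P = T := by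
  classical
  set F := hT.toFinset
  set e := F.orderEmbOfFin rfl
  have hpos : 0 < F.card := Finset.card_pos.2 ⟨a, hT.mem_toFinset.2 ha⟩
  have heT : ∀ i, e i ∈ T := fun i => hT.mem_toFinset.1 (F.orderEmbOfFin_mem rfl i)
  refine ⟨F.card, fun k => if h : k < F.card then e ⟨k, h⟩ else b, ?_, ?_, ?_, ?_⟩
  · intro j _ k hk hjk
    simp only [dif_pos (hjk.trans_le hk)]
    split_ifs with h
    · exact e.strictMono (Fin.mk_lt_mk.2 hjk)
    · exact (hTab (heT _)).2
  · simp only [dif_pos hpos]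
    rw [Finset.orderEmbOfFin_zero rfl hpos]
    exact le_antisymm (F.min'_le a (hT.mem_toFinset.2 ha))
      (hTab (hT.mem_toFinset.1 (F.min'_mem _))).1
  · simp
  · ext t
    constructor
    · rintro ⟨k, hk, rfl⟩
      simpa [dif_pos (show k < F.card from hk)] using heT _
    · intro ht
      obtain ⟨i, hi⟩ : t ∈ range e := by
        rw [Finset.range_orderEmbOfFin]
        exact hT.mem_toFinset.2 ht
      exact ⟨i, i.isLt, by simpa [i.isLt] using hi⟩

theorem StrictMonoOn.notMem_image_Iio_of_mem_Ioo {α : Type*} [Preorder α] {A : ℕ → α}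
    {P k : ℕ} (hA : StrictMonoOn A (Iic P)) (hk : k < P) {t : α}
    (ht : t ∈ Ioo (A k) (A (k + 1))) : t ∉ A '' Iio P := by
  rintro ⟨j, hj, rfl⟩
  have h₁ := (hA.lt_iff_lt (mem_Iic.2 hk.le) (mem_Iic.2 (le_of_lt hj))).1 ht.1
  have h₂ := (hA.lt_iff_lt (mem_Iic.2 (le_of_lt hj)) (mem_Iic.2 hk)).1 ht.2
  omega

section OrderedLine

open scoped Classical

variable {X Y : Type*}
  [ConditionallyCompleteLinearOrder X] [DenselyOrdered X] [TopologicalSpace X] [OrderTopology X]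
  [LinearOrder Y] [TopologicalSpace Y] [OrderTopology Y] {g : X → Y}

theorem injOn_Icc_of_forall_not_isLocalExtr {a b : X} (hg : ContinuousOn g (Icc a b))
    (hext : ∀ t ∈ Ioo a b, ¬IsLocalExtr g t) : InjOn g (Icc a b) := by
  intro s hs t ht hst
  by_contra hne
  wlog hlt : s < t generalizing s t
  · exact this ht hs hst.symm (Ne.symm hne) (lt_of_le_of_ne (not_lt.1 hlt) (Ne.symm hne))
  obtain ⟨u, hu, hu_ext⟩ := exists_isLocalExtr_Ioo hlt (hg.mono (Icc_subset_Icc hs.1 ht.2)) hst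
  exact hext u (Ioo_subset_Ioo hs.1 ht.2 hu) hu_ext

theorem encard_Ioo_inter_preimage_singleton {a b : X} (hab : a ≤ b)
    (hg : ContinuousOn g (Icc a b)) (hext : ∀ t ∈ Ioo a b, ¬IsLocalExtr g t) (ρ : Y) :
    (Ioo a b ∩ g ⁻¹' {ρ}).encard = if ρ ∈ uIoo (g a) (g b) then 1 else 0 := by
  have hinj := injOn_Icc_of_forall_not_isLocalExtr hg hext
  have himage : g '' Ioo a b = uIoo (g a) (g b) := by
    have ha := left_mem_Icc.2 hab
    have hb := right_mem_Icc.2 hab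
    rcases hg.strictMonoOn_of_injOn_Icc' hab hinj with hmono | hanti
    · rw [hg.image_Ioo_of_strictMonoOn hab hmono, uIoo_of_le (hmono.monotoneOn ha hb hab)]
    · rw [hg.image_Ioo_of_strictAntiOn hab hanti, uIoo_of_ge (hanti.antitoneOn ha hb hab)]
  rw [← (hinj.mono (inter_subset_left.trans Ioo_subset_Icc_self)).encard_image,
    image_inter_preimage, himage]
  split_ifs with h
  · rw [inter_eq_right.2 (singleton_subset_iff.2 h), encard_singleton]
  · rw [inter_singleton_eq_empty.2 h, encard_empty]

/-- Stated with `encard`, which is additive on disjoint unions without finiteness side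
conditions. -/
theorem encard_Ico_inter_preimage_singleton_eq_crossingCount {A : ℕ → X} {P : ℕ}
    (hA : StrictMonoOn A (Iic P)) (hg : Continuous g)
    (hext : ∀ k < P, ∀ t ∈ Ioo (A k) (A (k + 1)), ¬IsLocalExtr g t) {ρ : Y}
    (hρ : ∀ k < P, g (A k) ≠ ρ) :
    (Ico (A 0) (A P) ∩ g ⁻¹' {ρ}).encard = crossingCount (g ∘ A) P ρ := by
  induction P with
  | zero => simp [crossingCount]
  | succ P ih =>
    have hlt : A P < A (P + 1) := hA (by simp) (by simp) P.lt_succ_self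
    have hle : A 0 ≤ A P := hA.monotoneOn (by simp) (by simp) P.zero_le
    have hsplit : Ico (A 0) (A (P + 1)) ∩ g ⁻¹' {ρ} =
        (Ico (A 0) (A P) ∩ g ⁻¹' {ρ}) ∪ (Ioo (A P) (A (P + 1)) ∩ g ⁻¹' {ρ}) := by
      ext t
      simp only [mem_inter_iff, mem_union, Set.mem_Ico, Set.mem_Ioo, mem_preimage,
        mem_singleton_iff]
      constructor
      · rintro ⟨⟨h₁, h₂⟩, h₃⟩
        rcases lt_trichotomy t (A P) with h | rfl | h
        · exact Or.inl ⟨⟨h₁, h⟩, h₃⟩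
        · exact absurd h₃ (hρ P P.lt_succ_self)
        · exact Or.inr ⟨⟨h, h₂⟩, h₃⟩
      · rintro (⟨⟨h₁, h₂⟩, h₃⟩ | ⟨⟨h₁, h₂⟩, h₃⟩)
        · exact ⟨⟨h₁, h₂.trans hlt⟩, h₃⟩
        · exact ⟨⟨hle.trans h₁.le, h₂⟩, h₃⟩
    have hdisj : Disjoint (Ico (A 0) (A P) ∩ g ⁻¹' {ρ}) (Ioo (A P) (A (P + 1)) ∩ g ⁻¹' {ρ}) :=
      Set.disjoint_left.2 fun t h₁ h₂ => h₁.1.2.not_gt h₂.1.1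
    rw [hsplit, encard_union_eq hdisj,
      ih (hA.mono (Iic_subset_Iic.2 P.le_succ)) (fun k hk => hext k (by omega))
        (fun k hk => hρ k (by omega)),
      encard_Ioo_inter_preimage_singleton hlt.le hg.continuousOn (hext P P.lt_succ_self),
      crossingCount_succ, Function.comp_apply, Function.comp_apply]
    split_ifs <;> simp

end OrderedLine

namespace KnotMorse

variable {K : Set S3} (m : KnotMorse K)

def critPts : Set S3 := {x | x ∈ K ∧ IsLocalExtrOn m.h K x}

theorem continuous_h : Continuous m.h :=
  m.smooth_twoCrit.1.continuous

theorem midpt_mem_Ioo (i : Fin m.n) : m.midpt i ∈ Ioo (m.c i.castSucc) (m.c i.succ) := by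
  have := m.c_mono (Fin.castSucc_lt_succ (i := i))
  constructor <;> simp only [midpt] <;> linarith

theorem h_mem_range_c {x : S3} (hx : x ∈ m.critPts) : m.h x ∈ range m.c :=
  (m.crit_complete x hx.1 hx.2).imp fun _ hi => hi.symm

theorem injOn_h_critPts : InjOn m.h m.critPts := by
  rintro x ⟨hxK, hx⟩ y ⟨hyK, hy⟩ hxy
  obtain ⟨i, hi⟩ := m.crit_complete x hxK hx
  exact (m.crit_exists i).unique ⟨hxK, hx, hi⟩ ⟨hyK, hy, hxy ▸ hi⟩

theorem finite_critPts : m.critPts.Finite :=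
  Finite.of_finite_image ((finite_range m.c).subset
    (image_subset_iff.2 fun _ hx => m.h_mem_range_c hx)) m.injOn_h_critPts

/-- `v` lists the critical values of `h|_K` in their order along the knot, from one critical
point around to itself. -/
theorem exists_cnt_eq_crossingCount (hK : IsKnot K) :
    ∃ (P : ℕ) (v : ℕ → ℝ), v P = v 0 ∧ InjOn v (Iio P) ∧ (∀ k < P, v k ∈ range m.c) ∧
      ∀ i, m.cnt i = crossingCount v P (m.midpt i) := by
  obtain ⟨φ⟩ := hK
  set γ := circleParam φ
  have hcrit (t : ℝ) : IsLocalExtr (m.h ∘ γ) t ↔ γ t ∈ m.critPts :=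
    (isLocalExtr_comp_circleParam_iff φ).trans (and_iff_right (φ.symm _).2).symm
  obtain ⟨p, ⟨hpK, hp, -⟩, -⟩ := m.crit_exists 0
  obtain ⟨t₀, -, rfl⟩ : p ∈ γ '' Ico 0 (0 + 2 * π) := (image_circleParam_Ico φ 0).symm ▸ hpK
  have hγinj : InjOn γ (Ico t₀ (t₀ + 2 * π)) := injOn_circleParam φ t₀
  set T := {t ∈ Ico t₀ (t₀ + 2 * π) | IsLocalExtr (m.h ∘ γ) t}
  have hT : T.Finite := Finite.of_finite_image (m.finite_critPts.subset
    (image_subset_iff.2 fun t ht => (hcrit t).1 ht.2)) (hγinj.mono fun _ ht => ht.1)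
  obtain ⟨P, A, hA, hA0, hAP, hAT⟩ := hT.exists_strictMonoOn_enum
    ⟨left_mem_Ico.2 (by linarith [pi_pos]), (hcrit t₀).2 ⟨hpK, hp⟩⟩ fun _ ht => ht.1
  have hAcrit : ∀ k < P, A k ∈ Ico t₀ (t₀ + 2 * π) ∧ γ (A k) ∈ m.critPts := fun k hk =>
    have hAk : A k ∈ T := hAT ▸ mem_image_of_mem A hk
    ⟨hAk.1, (hcrit _).1 hAk.2⟩
  have hv : ∀ k < P, m.h (γ (A k)) ∈ range m.c := fun k hk => m.h_mem_range_c (hAcrit k hk).2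
  refine ⟨P, (m.h ∘ γ) ∘ A, ?_, fun j hj k hk hjk => ?_, hv, fun i => ?_⟩
  · simp only [Function.comp_apply, hA0, hAP, γ, periodic_circleParam φ t₀]
  · refine hA.injOn (mem_Iic.2 (le_of_lt hj)) (mem_Iic.2 (le_of_lt hk)) ?_
    exact hγinj (hAcrit j hj).1 (hAcrit k hk).1
      (m.injOn_h_critPts (hAcrit j hj).2 (hAcrit k hk).2 hjk)
  have hρ : ∀ k < P, (m.h ∘ γ) (A k) ≠ m.midpt i := fun k hk h =>
    m.c_mono.notMem_range_of_mem_Ioo (m.midpt_mem_Ioo i) (h ▸ hv k hk)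
  have hext : ∀ k < P, ∀ t ∈ Ioo (A k) (A (k + 1)), ¬IsLocalExtr (m.h ∘ γ) t := by
    intro k hk t ht hgt
    have hsub : Ioo (A k) (A (k + 1)) ⊆ Ico t₀ (t₀ + 2 * π) := by
      rw [← hAP, ← hA0]
      exact (Ioo_subset_Ioo (hA.monotoneOn (by simp) (by simpa using hk.le) k.zero_le)
          (hA.monotoneOn (by simpa using hk) (by simp) hk)).trans Ioo_subset_Ico_self
    exact hA.notMem_image_Iio_of_mem_Ioo hk ht (hAT ▸ ⟨hsub ht, hgt⟩)
  rw [cnt, ncard_inter_preimage_eq_ncard_Ico φ m.h _ t₀, ncard_def, ← hAP, ← hA0,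
    encard_Ico_inter_preimage_singleton_eq_crossingCount hA
      (m.continuous_h.comp (continuous_circleParam φ)) hext hρ, ENat.toNat_natCast]

theorem trunk_sq_le_two_mul_width (hK : IsKnot K) : m.trunk ^ 2 ≤ 2 * m.width := by
  obtain ⟨P, v, hP, hinj, hv, hcnt⟩ := m.exists_cnt_eq_crossingCount hK
  have hcnt_sq (i : Fin m.n) : m.cnt i ^ 2 ≤ 2 * m.width := by
    simpa only [width, hcnt] using
      sq_crossingCount_le_two_mul_sum m.c_mono m.midpt_mem_Ioo hP hinj hv i
  rcases (Finset.univ : Finset (Fin m.n)).eq_empty_or_nonempty with h | h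
  · simp [trunk, h]
  · obtain ⟨i, -, hi⟩ := Finset.exists_mem_eq_sup _ h m.cnt
    rw [trunk, hi]
    exact hcnt_sq i

end KnotMorse

theorem knotTrunk_sq_le_two_mul_knotWidth {K : Set S3} (hK : IsKnot K) :
    knotTrunk K ^ 2 ≤ 2 * knotWidth K := by
  rcases isEmpty_or_nonempty (KnotMorse K) with hempty | ⟨⟨m₀⟩⟩
  · simp [knotTrunk]
  have hne : {w | ∃ m : KnotMorse K, m.width = w}.Nonempty := ⟨_, m₀, rfl⟩
  obtain ⟨m, hm⟩ := Nat.sInf_mem hne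
  have htrunk : knotTrunk K ≤ m.trunk := Nat.sInf_le ⟨m, rfl⟩
  calc knotTrunk K ^ 2 ≤ m.trunk ^ 2 := Nat.pow_le_pow_left htrunk 2
    _ ≤ 2 * m.width := m.trunk_sq_le_two_mul_width hK
    _ = 2 * knotWidth K := by rw [hm, knotWidth]

/-- For any knot `K` in `S³`, `w(K) ≥ trunk(K)² / 2`. -/
theorem width_ge_trunk_sq_div_two (K : Set S3) (hK : IsKnot K) :
    ((knotTrunk K : ℝ)) ^ 2 / 2 ≤ (knotWidth K : ℝ) := by
  have : (knotTrunk K : ℝ) ^ 2 ≤ 2 * knotWidth K := by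
    exact_mod_cast knotTrunk_sq_le_two_mul_knotWidth hK
  linarith

end
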